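/- arXiv:2001.05767 — 3 statements merged into one kernel-verified Lean document; each statement's English description precedes it below -/
import Mathlib

section
/- For integers k ≥ 1 and q ≥ 2, the minimum length n of a word over a q-symbol alphabet that contains every word of length k as a subsequence is exactly qk. -/
/-!
Concatenating `k` copies of an enumeration of the alphabet gives a `k`-universal word of length
`q * k`: the `i`-th letter of any word of length `k` is picked from the `i`-th copy. Conversely,
a `k`-universal word contains each constant word `a^k`, so every letter occurs at least `k` times
in it, and its length is at least `q * k`.
-/

theorem List.sublist_flatten_replicate {α : Type*} {l : List α} :
    ∀ {u : List α} {k : ℕ}, (∀ a ∈ u, a ∈ l) → u.length ≤ k → u.Sublist (replicate k l).flatten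
  | [], _, _, _ => nil_sublist _
  | a :: u, k + 1, hu, hk => by
    rw [replicate_succ, flatten_cons, ← singleton_append]
    exact (singleton_sublist.mpr (hu a mem_cons_self)).append
      (sublist_flatten_replicate (fun b hb => hu b (mem_cons_of_mem a hb)) (by simpa using hk))

theorem List.card_mul_le_length_of_forall_replicate_sublist {α : Type*} [Fintype α]
    [DecidableEq α] {w : List α} {k : ℕ} (h : ∀ a : α, (replicate k a).Sublist w) :
    Fintype.card α * k ≤ w.length :=
  calc Fintype.card α * k = ∑ _a : α, k := by simp
    _ ≤ ∑ a : α, w.count a := Finset.sum_le_sum fun a _ => replicate_sublist_iff.mp (h a)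
    _ = w.length := by
      simpa using Multiset.sum_count_eq_card (m := (w : Multiset α)) fun a _ => Finset.mem_univ a

theorem min_length_universal_word_general (q k : ℕ) :
    IsLeast {n : ℕ | ∃ w : List (Fin q), w.length = n ∧
      ∀ u : List (Fin q), u.length = k → u.Sublist w} (q * k) := by
  refine ⟨⟨(List.replicate k (List.finRange q)).flatten, by simp [Nat.mul_comm], ?_⟩, ?_⟩
  · intro u hu
    exact List.sublist_flatten_replicate (fun a _ => List.mem_finRange a) hu.le
  · rintro n ⟨w, rfl, hw⟩
    simpa using List.card_mul_le_length_of_forall_replicate_sublist fun a =>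
      hw (List.replicate k a) List.length_replicate

/-- The minimum length of a `k`-universal word over a `q`-symbol alphabet is exactly `q * k`. -/
theorem min_length_universal_word (q k : ℕ) (hq : 2 ≤ q) (hk : 1 ≤ k) :
    IsLeast {n : ℕ | ∃ w : List (Fin q), w.length = n ∧
      ∀ u : List (Fin q), u.length = k → u.Sublist w} (q * k) :=
  min_length_universal_word_general q k
end

section
/- Let w be a word over a finite alphabet Σ with greedy universal decomposition w = u_1 ⋯ u_ℓ u', where each u_i is the minimal prefix of u_i ⋯ u_ℓ u' containing all symbols of Σ, and u' does not contain all symbols of Σ. If ℓ < k, then w is not k-universal; specifically, the word σ_1 σ_2 ⋯ σ_ℓ σ_{ℓ+1} of length ℓ+1 ≤ k is not a subsequence of w, where σ_i is the last symbol of u_i for i ≤ ℓ and σ_{ℓ+1} is any symbol of Σ not appearing in u'. -/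
/-!
Match the pattern against `w` greedily from the left: since `σ_i` does not occur in `v_i`, the
letter `σ_i` can be matched no earlier than the last position of the block `u_i = v_i σ_i`.
After the `ℓ` blocks, `σ'` would have to be matched inside `u'`, which does not contain it.
-/

theorem List.Sublist.of_cons_of_notMem_append {α : Type*} {a : α} {s t r : List α}
    (h : (a :: s).Sublist (t ++ r)) (ha : a ∉ t) : (a :: s).Sublist r := by
  induction t with
  | nil => exact h
  | cons b t ih =>
    exact ih (h.of_cons_of_ne (List.ne_of_not_mem_cons ha)) (List.not_mem_of_not_mem_cons ha)

theorem List.Sublist.of_map_snd_append_flatten {α : Type*} {bs : List (List α × α)}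
    (hbs : ∀ p ∈ bs, p.2 ∉ p.1) {s t : List α}
    (h : (bs.map Prod.snd ++ s).Sublist ((bs.map fun p => p.1 ++ [p.2]).flatten ++ t)) :
    s.Sublist t := by
  induction bs with
  | nil => simpa using h
  | cons p bs ih =>
    simp only [List.map_cons, List.flatten_cons, List.cons_append, List.append_assoc] at h
    exact ih (fun q hq => hbs q (List.mem_cons_of_mem p hq))
      (List.cons_sublist_cons.mp (h.of_cons_of_notMem_append (hbs p List.mem_cons_self)))

theorem greedy_decomposition_not_universal_general {α : Type*}
    (ℓ : ℕ)
    (v : Fin ℓ → List α) (σ : Fin ℓ → α)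
    (hmin : ∀ i, σ i ∉ v i)
    (u' : List α) (σ' : α) (hσ' : σ' ∉ u') :
    ¬ (List.ofFn σ ++ [σ']).Sublist
        ((List.ofFn (fun i => v i ++ [σ i])).flatten ++ u') := by
  intro h
  have hblocks : ∀ p ∈ List.ofFn (fun i => (v i, σ i)), p.2 ∉ p.1 := by
    simpa [List.mem_ofFn] using hmin
  refine hσ' (List.singleton_sublist.mp (List.Sublist.of_map_snd_append_flatten hblocks ?_))
  simpa [List.map_ofFn, Function.comp_def] using h

/-- If `w = u_1 ⋯ u_ℓ u'` where each block `u_i = v_i ++ [σ_i]` contains all symbols, with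
`σ_i` not occurring before its last position in its block, and `u'` misses the symbol `σ'`,
then with `ℓ < k` the word `σ_1 ⋯ σ_ℓ σ'` (of length `ℓ + 1 ≤ k`) is not a subsequence of `w`;
in particular `w` is not `k`-universal. -/
theorem greedy_decomposition_not_universal {α : Type*} [Fintype α]
    (hq : 2 ≤ Fintype.card α) (ℓ k : ℕ) (hk : ℓ < k)
    (v : Fin ℓ → List α) (σ : Fin ℓ → α)
    (hall : ∀ i, ∀ a : α, a ∈ v i ++ [σ i])
    (hmin : ∀ i, σ i ∉ v i)
    (u' : List α) (σ' : α) (hσ' : σ' ∉ u') :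
    ¬ (List.ofFn σ ++ [σ']).Sublist
        ((List.ofFn (fun i => v i ++ [σ i])).flatten ++ u') :=
  greedy_decomposition_not_universal_general ℓ v σ hmin u' σ' hσ'
end

section
/- A word w over a finite alphabet Σ of size q is k-universal if and only if ν_Σ(w) ≥ k, where ν_Σ(w) is the number of complete blocks in the greedy universal decomposition of w. -/
/-!
Reading `w` greedily, the first letter of a word `u` can be embedded inside the first universal
block of `w`, and the rest of `u` into the remainder, which has one block fewer; so words of
length at most `ν(w)` embed. Conversely, choose in each block its last new letter (the one completing
the alphabet) and, after the last complete block, a letter missing from the incomplete tail: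
this word of length `ν(w) + 1` does not embed, since greedily matching each letter pushes the
embedding past the corresponding block. Padding it gives non-embedded words of every length
`k > ν(w)`.
-/

/-- Greedy universal decomposition counter: processing the word symbol by symbol, a block is
completed exactly when the set of symbols collected since the last completed block becomes the
whole alphabet.  `nuAux s w` is the number of blocks completed, starting with collected set `s`;
`nuAux ∅ w` is `ν_Σ(w)`, the number of complete blocks in the greedy universal decomposition. -/
def nuAux {q : ℕ} : Finset (Fin q) → List (Fin q) → ℕ
  | _, [] => 0
  | s, a :: rest =>
      if insert a s = Finset.univ then nuAux ∅ rest + 1 else nuAux (insert a s) rest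

section Greedy

variable {q : ℕ}

@[simp]
lemma nuAux_nil (s : Finset (Fin q)) : nuAux s [] = 0 := rfl

lemma nuAux_cons_of_eq_univ {s : Finset (Fin q)} {b : Fin q} (h : insert b s = Finset.univ)
    (rest : List (Fin q)) : nuAux s (b :: rest) = nuAux ∅ rest + 1 := by
  simp [nuAux, h]

lemma nuAux_cons_of_ne_univ {s : Finset (Fin q)} {b : Fin q} (h : insert b s ≠ Finset.univ)
    (rest : List (Fin q)) : nuAux s (b :: rest) = nuAux (insert b s) rest := by
  simp [nuAux, h]

/-- Starting from a larger collected set completes each block earlier, but can gain at most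
one block overall. -/
lemma nuAux_le_nuAux_and_le_succ_of_subset (w : List (Fin q)) {s t : Finset (Fin q)} (hst : s ⊆ t) :
    nuAux s w ≤ nuAux t w ∧ nuAux t w ≤ nuAux s w + 1 := by
  induction w generalizing s t with
  | nil => simp
  | cons b rest ih =>
    have hins : insert b s ⊆ insert b t := Finset.insert_subset_insert b hst
    by_cases ht : insert b t = Finset.univ
    · by_cases hs : insert b s = Finset.univ
      · simp [nuAux_cons_of_eq_univ ht, nuAux_cons_of_eq_univ hs]
      · rw [nuAux_cons_of_eq_univ ht, nuAux_cons_of_ne_univ hs]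
        have := ih (Finset.empty_subset (insert b s))
        omega
    · have hs : insert b s ≠ Finset.univ := fun h ↦ ht (Finset.univ_subset_iff.mp (h ▸ hins))
      rw [nuAux_cons_of_ne_univ ht, nuAux_cons_of_ne_univ hs]
      exact ih hins

lemma nuAux_le_nuAux_empty_add_one (s : Finset (Fin q)) (w : List (Fin q)) :
    nuAux s w ≤ nuAux ∅ w + 1 :=
  (nuAux_le_nuAux_and_le_succ_of_subset w (Finset.empty_subset s)).2

/-- A letter `a` not yet collected occurs in `w` no later than the end of the current block,
so cutting `w` just after an occurrence of `a` loses at most that block. -/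
lemma exists_eq_append_cons_nuAux_le {s : Finset (Fin q)} {a : Fin q} (ha : a ∉ s)
    {w : List (Fin q)} (hw : 1 ≤ nuAux s w) :
    ∃ w₁ w₂, w = w₁ ++ a :: w₂ ∧ nuAux s w ≤ nuAux ∅ w₂ + 1 := by
  induction w generalizing s with
  | nil => simp at hw
  | cons b rest ih =>
    by_cases hab : a = b
    · subst hab
      refine ⟨[], rest, rfl, ?_⟩
      by_cases hb : insert a s = Finset.univ
      · rw [nuAux_cons_of_eq_univ hb]
      · rw [nuAux_cons_of_ne_univ hb]
        exact nuAux_le_nuAux_empty_add_one _ rest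
    · have hb : insert b s ≠ Finset.univ := fun h ↦ by
        simpa [hab, ha] using (h ▸ Finset.mem_univ a : a ∈ insert b s)
      rw [nuAux_cons_of_ne_univ hb] at hw ⊢
      obtain ⟨w₁, w₂, rfl, hle⟩ := ih (by simp [hab, ha]) hw
      exact ⟨b :: w₁, w₂, rfl, hle⟩

lemma sublist_of_length_le_nuAux_empty {u w : List (Fin q)} (h : u.length ≤ nuAux ∅ w) :
    u.Sublist w := by
  induction u generalizing w with
  | nil => exact List.nil_sublist w
  | cons a u ih =>
    rw [List.length_cons] at h
    obtain ⟨w₁, w₂, rfl, hle⟩ :=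
      exists_eq_append_cons_nuAux_le (Finset.notMem_empty a) (w := w) (by omega)
    exact (List.cons_sublist_cons.mpr (ih (by omega))).trans (List.sublist_append_right w₁ _)

lemma exists_not_sublist_length_eq_nuAux [NeZero q] (w : List (Fin q)) {s : Finset (Fin q)}
    (hs : s ≠ Finset.univ) :
    ∃ a t, a ∉ s ∧ t.length = nuAux s w ∧ ¬ (a :: t).Sublist w := by
  induction w generalizing s with
  | nil =>
    obtain ⟨a, -, ha⟩ := Finset.exists_of_ssubset (Finset.ssubset_univ_iff.mpr hs)
    exact ⟨a, [], ha, rfl, by simp⟩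
  | cons b rest ih =>
    by_cases hb : insert b s = Finset.univ
    · obtain ⟨a, t, -, hlen, hsub⟩ := ih Finset.univ_nonempty.ne_empty.symm
      have hbs : b ∉ s := fun hmem ↦ hs (by rwa [Finset.insert_eq_self.mpr hmem] at hb)
      refine ⟨b, a :: t, hbs, by simp [nuAux_cons_of_eq_univ hb, hlen], ?_⟩
      rwa [List.cons_sublist_cons]
    · obtain ⟨a, t, ha, hlen, hsub⟩ := ih hb
      have hab : a ≠ b := fun h ↦ ha (h ▸ Finset.mem_insert_self b s)
      exact ⟨a, t, fun h ↦ ha (Finset.mem_insert_of_mem h),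
        hlen.trans (nuAux_cons_of_ne_univ hb rest).symm, fun h ↦ hsub (h.of_cons_of_ne hab)⟩

end Greedy

/-- A word `w` over a `q`-symbol alphabet is `k`-universal iff `ν_Σ(w) ≥ k`. -/
theorem universal_iff_nu_ge (q k : ℕ) (hq : 2 ≤ q) (w : List (Fin q)) :
    (∀ u : List (Fin q), u.length = k → u.Sublist w) ↔ k ≤ nuAux ∅ w := by
  refine ⟨fun huniv ↦ ?_, fun h u hu ↦ sublist_of_length_le_nuAux_empty (hu ▸ h)⟩
  by_contra! hlt
  have : NeZero q := ⟨by omega⟩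
  obtain ⟨a, t, -, hlen, hsub⟩ :=
    exists_not_sublist_length_eq_nuAux w (Finset.univ_nonempty.ne_empty.symm)
  have hpad := huniv (a :: t ++ List.replicate (k - (t.length + 1)) a) (by simp; omega)
  exact hsub ((List.sublist_append_left _ _).trans hpad)
end
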